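/- Suppose nonnegative functions Ψ, S on (0, r₀] satisfy, for all 0 < r ≤ ρ/4 ≤ r₀/4 and a fixed small ε > 0: Ψ(r/2) + ε₃S(r/2) ≤ ε + C[ε²(ρ/r)³ + (r/ρ)² + ε₃(ρ/r)²]Ψ(ρ) + C[ε^{1/3}(r/ρ)^{1/3} + ε₃(r/ρ)]S(ρ). Then one can choose θ ∈ (0,1/4) with θ < 1/(8³(C+1)³), and then ε₃ < θ²/(16C²) and ε < min{ε*/4, ε₃³, θ^{3/2}/(4C^{1/2})}, so that Φ(r) := Ψ(r)+ε₃S(r) satisfies Φ(θr) ≤ ε*/4 + Φ(r)/4 for all r ≤ r₀, hence Φ(r) ≤ ε*/2 for all sufficiently small r. -/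
import Mathlib

set_option maxHeartbeats 1000000

open Set

private lemma cube_root_cube (x : ℝ) (hx : 0 ≤ x) : (x^3) ^ ((1:ℝ)/3) = x := by
  rw [← Real.rpow_natCast x 3, ← Real.rpow_mul hx,
    show ((3:ℕ):ℝ) * ((1:ℝ)/3) = 1 by norm_num, Real.rpow_one]

private lemma kkA (C θ ε₃ ε : ℝ) (hC : 0 < C) (hθ0 : 0 < θ) (hθ4096 : θ ≤ 1/4096)
    (hCθ : C*θ ≤ 1/16) (hε₃ : ε₃ = θ^2/(32*(C+1)^2)) (hε2mul : ε^2*(16*C) ≤ θ^3) :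
    C * (ε^2 * (1/(2*θ))^3 + (2*θ)^2 + ε₃ * (1/(2*θ))^2) ≤ 1/4 := by
  have hC1 : (0:ℝ) < C+1 := by linarith
  have key : C * (ε^2 * (1/(2*θ))^3 + (2*θ)^2 + ε₃ * (1/(2*θ))^2)
      = (C*ε^2)/(8*θ^3) + C*4*θ^2 + (C*ε₃)/(4*θ^2) := by
    field_simp
    ring
  rw [key]
  have t1 : (C*ε^2)/(8*θ^3) ≤ 1/128 := by
    rw [div_le_iff₀ (by positivity)]
    nlinarith [hε2mul]
  have t2 : C*4*θ^2 ≤ 1/128 := by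
    nlinarith [mul_le_mul hCθ hθ4096 hθ0.le (by norm_num : (0:ℝ) ≤ 1/16)]
  have t3 : (C*ε₃)/(4*θ^2) ≤ 1/128 := by
    have e : (C*ε₃)/(4*θ^2) = C/(128*(C+1)^2) := by
      rw [hε₃]; field_simp; ring
    rw [e, div_le_div_iff₀ (by positivity) (by norm_num)]
    nlinarith
  linarith

private lemma kkB (C d θ ε₃ x y : ℝ) (hC : 0 < C) (hε₃0 : 0 < ε₃) (hθ0 : 0 < θ)
    (hθd : θ ≤ d) (hCd : C*d ≤ 1/16) (hx0 : 0 ≤ x) (hx : x ≤ ε₃) (hy0 : 0 ≤ y)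
    (hy : y ≤ 2*d) : C*(x*y + ε₃*(2*θ)) ≤ ε₃/4 := by
  have h1 : x*y ≤ ε₃*(2*d) := mul_le_mul hx hy hy0 hε₃0.le
  have hCθ : C*θ ≤ C*d := mul_le_mul_of_nonneg_left hθd hC.le
  have t1 : C*(x*y) ≤ ε₃/8 := by
    have h2 := mul_le_mul_of_nonneg_left h1 hC.le
    have h3 := mul_le_mul_of_nonneg_left hCd hε₃0.le
    nlinarith
  have t2 : C*(ε₃*(2*θ)) ≤ ε₃/8 := by
    have h2 := mul_le_mul_of_nonneg_left hCθ hε₃0.le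
    have h3 := mul_le_mul_of_nonneg_left hCd hε₃0.le
    nlinarith
  nlinarith [t1, t2]

private lemma kkBase (ε ε₃ t1 t2 θ : ℝ) (hθ0 : 0 < θ) (ht1p : 0 < t1) (ht1 : t1 < 4/θ)
    (ht2p : 0 ≤ t2) (ht2 : t2 ≤ 1/4) (hε₃0 : 0 < ε₃) (hε0 : 0 < ε) :
    ε^2*t1^3 + t2^2 + ε₃*t1^2 ≤ ε^2*(64/θ^3) + 1 + ε₃*(16/θ^2) := by
  have b1 : t1^3 ≤ 64/θ^3 := by
    have h := pow_le_pow_left₀ ht1p.le ht1.le 3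
    rw [div_pow] at h; norm_num at h; linarith
  have b2 : t2^2 ≤ 1 := by nlinarith
  have b3 : t1^2 ≤ 16/θ^2 := by
    have h := pow_le_pow_left₀ ht1p.le ht1.le 2
    rw [div_pow] at h; norm_num at h; linarith
  have n1 := mul_le_mul_of_nonneg_left b1 (sq_nonneg ε)
  have n3 := mul_le_mul_of_nonneg_left b3 hε₃0.le
  nlinarith [n1, n3]

/-- The interior iteration scheme in the proof of Theorem 4.1 of Kang–Kim
(Appendix): given the combined energy/pressure inequality for `Ψ` and `S`, one
can choose `θ < 1/(8³(C+1)³)`, `ε₃ < θ²/(16C²)` and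
`ε < min{ε*/4, ε₃³, θ^{3/2}/(4C^{1/2})}` so that `Φ = Ψ + ε₃S` satisfies
`Φ(θr) ≤ ε*/4 + Φ(r)/4`, hence `Φ(r) ≤ ε*/2` for all small `r`. -/
theorem stmt18 (C εstar : ℝ) (hC : 0 < C) (hεs : 0 < εstar) :
    ∃ θ ∈ Ioo (0:ℝ) (1/4), θ < 1/(8^3 * (C+1)^3) ∧
    ∃ ε₃ ∈ Ioo (0:ℝ) (θ^2/(16*C^2)),
    ∃ ε ∈ Ioo (0:ℝ) (min (εstar/4) (min (ε₃^3) (θ ^ ((3:ℝ)/2) / (4 * Real.sqrt C)))),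
      ∀ (Ψ S : ℝ → ℝ) (r₀ : ℝ), 0 < r₀ →
      (∀ r ∈ Ioc (0:ℝ) r₀, 0 ≤ Ψ r ∧ 0 ≤ S r) →
      (∀ r ρ : ℝ, 0 < r → r ≤ ρ/4 → ρ ≤ r₀ →
        Ψ (r/2) + ε₃ * S (r/2) ≤ ε +
          C * (ε^2 * (ρ/r)^3 + (r/ρ)^2 + ε₃ * (ρ/r)^2) * Ψ ρ +
          C * (ε ^ ((1:ℝ)/3) * (r/ρ) ^ ((1:ℝ)/3) + ε₃ * (r/ρ)) * S ρ) →
      (∀ r : ℝ, 0 < r → r ≤ r₀ →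
        Ψ (θ*r) + ε₃ * S (θ*r) ≤ εstar/4 + (Ψ r + ε₃ * S r) / 4) ∧
      ∃ r₁ > (0:ℝ), ∀ r : ℝ, 0 < r → r < r₁ → Ψ r + ε₃ * S r ≤ εstar/2 := by
  classical
  have hC1 : (0:ℝ) < C + 1 := by linarith
  set d : ℝ := 1/(16*(C+1)) with hd
  have hd0 : 0 < d := by positivity
  have hcd : (C+1) * d = 1/16 := by
    rw [hd]; field_simp
  have hd16 : d ≤ 1/16 := by nlinarith
  set θ : ℝ := d^3 with hθdef
  have hθ0 : 0 < θ := by positivity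
  have hθ4096 : θ ≤ 1/4096 := by
    have h := pow_le_pow_left₀ hd0.le hd16 3
    rw [hθdef]; norm_num at h ⊢; linarith
  have hθd : θ ≤ d := by
    have h2 : d*d ≤ (1/16)*(1/16) := mul_le_mul hd16 hd16 hd0.le (by norm_num)
    have h3 := mul_le_mul_of_nonneg_right h2 hd0.le
    rw [hθdef]; nlinarith [hd0]
  have hθ1 : θ < 1 := by linarith
  have hθ16 : θ ≤ 1/16 := by linarith
  have hCd : C * d ≤ 1/16 := by nlinarith [hcd, hd0]
  have hCθ : C * θ ≤ 1/16 := by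
    have := mul_le_mul_of_nonneg_left hθd hC.le
    linarith
  set ε₃ : ℝ := θ^2/(32*(C+1)^2) with hε₃def
  have hε₃0 : 0 < ε₃ := by positivity
  set m : ℝ := min (εstar/4) (min (ε₃^3) (θ ^ ((3:ℝ)/2) / (4 * Real.sqrt C))) with hm
  have hsqrtC : 0 < Real.sqrt C := Real.sqrt_pos.mpr hC
  have hm0 : 0 < m := by
    apply lt_min (by positivity) (lt_min (by positivity) (by positivity))
  set ε : ℝ := m/2 with hεdef
  have hε0 : 0 < ε := by positivity
  have hεm : ε < m := by rw [hεdef]; exact half_lt_self hm0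
  have hεle1 : ε ≤ εstar/4 := le_trans hεm.le (min_le_left _ _)
  have hεle2 : ε ≤ ε₃^3 := le_trans hεm.le ((min_le_right _ _).trans (min_le_left _ _))
  have hεle3 : ε ≤ θ ^ ((3:ℝ)/2) / (4 * Real.sqrt C) :=
    le_trans hεm.le ((min_le_right _ _).trans (min_le_right _ _))
  -- key quantitative facts
  have hε2 : ε^2 ≤ θ^3/(16*C) := by
    have h := pow_le_pow_left₀ hε0.le hεle3 2
    have hs : (θ ^ ((3:ℝ)/2) / (4*Real.sqrt C))^2 = θ^3/(16*C) := by
      rw [div_pow, mul_pow, Real.sq_sqrt hC.le]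
      congr 1
      · rw [← Real.rpow_natCast (θ ^ ((3:ℝ)/2)) 2, ← Real.rpow_mul hθ0.le,
          show ((3:ℝ)/2) * ((2:ℕ):ℝ) = ((3:ℕ):ℝ) by norm_num, Real.rpow_natCast]
      · norm_num
    linarith [hs ▸ h]
  have hε2mul : ε^2 * (16*C) ≤ θ^3 := by
    rw [← le_div_iff₀ (by positivity)]; exact hε2
  have hε13 : ε ^ ((1:ℝ)/3) ≤ ε₃ := by
    calc ε ^ ((1:ℝ)/3) ≤ (ε₃^3) ^ ((1:ℝ)/3) := Real.rpow_le_rpow hε0.le hεle2 (by norm_num)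
    _ = ε₃ := cube_root_cube ε₃ hε₃0.le
  have h2θ13 : (2*θ) ^ ((1:ℝ)/3) ≤ 2*d := by
    calc (2*θ) ^ ((1:ℝ)/3) ≤ ((2*d)^3) ^ ((1:ℝ)/3) := by
          apply Real.rpow_le_rpow (by positivity) ?_ (by norm_num)
          rw [hθdef]; nlinarith [pow_nonneg hd0.le 3]
    _ = 2*d := cube_root_cube _ (by positivity)
  have hA : C * (ε^2 * (1/(2*θ))^3 + (2*θ)^2 + ε₃ * (1/(2*θ))^2) ≤ 1/4 :=
    kkA C θ ε₃ ε hC hθ0 hθ4096 hCθ hε₃def hε2mul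
  have hB : C * (ε ^ ((1:ℝ)/3) * (2*θ) ^ ((1:ℝ)/3) + ε₃ * (2*θ)) ≤ ε₃/4 :=
    kkB C d θ ε₃ _ _ hC hε₃0 hθ0 hθd hCd (Real.rpow_nonneg hε0.le _) hε13
      (Real.rpow_nonneg (by positivity) _) h2θ13
  clear_value d θ ε₃ m ε
  refine ⟨θ, ⟨hθ0, by linarith⟩, ?_, ε₃, ⟨hε₃0, ?_⟩, ε, ⟨hε0, by rw [hm] at hεm; exact hεm⟩, ?_⟩
  · -- θ < 1/(8^3 (C+1)^3)
    rw [lt_div_iff₀ (by positivity)]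
    have h512 : θ * (8^3*(C+1)^3) = 8^3 * ((C+1)*d)^3 := by rw [hθdef]; ring
    rw [h512, hcd]; norm_num
  · -- ε₃ < θ^2/(16 C^2)
    rw [hε₃def, div_lt_div_iff₀ (by positivity) (by positivity)]
    have h1 : C^2 < 2*(C+1)^2 := by nlinarith
    have h2 : 0 < θ^2 := by positivity
    nlinarith [mul_lt_mul_of_pos_left h1 h2]
  intro Ψ S r₀ hr₀ hnn key
  -- Part 1: the contraction inequality
  have hcontr : ∀ r : ℝ, 0 < r → r ≤ r₀ →
      Ψ (θ*r) + ε₃ * S (θ*r) ≤ εstar/4 + (Ψ r + ε₃ * S r) / 4 := by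
    intro r hr0 hrr₀
    have hθr : 2*θ*r ≤ r/4 := by
      have := mul_le_mul_of_nonneg_right hθ16 hr0.le
      linarith only [this, hr0]
    have h := key (2*θ*r) r (by positivity) hθr hrr₀
    have e1 : 2*θ*r/2 = θ*r := by ring
    have e2 : 2*θ*r/r = 2*θ := by field_simp
    have e3 : r/(2*θ*r) = 1/(2*θ) := by
      rw [div_eq_div_iff (by positivity) (by positivity)]; ring
    rw [e1, e2, e3] at h
    obtain ⟨hΨ, hS⟩ := hnn r ⟨hr0, hrr₀⟩
    have m1 := mul_le_mul_of_nonneg_right hA hΨ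
    have m2 := mul_le_mul_of_nonneg_right hB hS
    set A := C * (ε^2 * (1/(2*θ))^3 + (2*θ)^2 + ε₃ * (1/(2*θ))^2) with hAdef
    set B := C * (ε ^ ((1:ℝ)/3) * (2*θ) ^ ((1:ℝ)/3) + ε₃ * (2*θ)) with hBdef
    linarith only [h, m1, m2, hεle1]
  refine ⟨hcontr, ?_⟩
  -- Part 2: smallness for all small radii
  obtain ⟨hΨ₀, hS₀⟩ := hnn r₀ ⟨hr₀, le_refl r₀⟩
  set M : ℝ := ε + C*(ε^2*(64/θ^3) + 1 + ε₃*(16/θ^2)) * Ψ r₀ + C*(2*ε₃) * S r₀ with hMdef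
  clear_value M
  have hM0 : 0 ≤ M := by
    have c1 : (0:ℝ) ≤ C*(ε^2*(64/θ^3) + 1 + ε₃*(16/θ^2)) := by positivity
    have c2 : (0:ℝ) ≤ C*(2*ε₃) := by positivity
    rw [hMdef]
    have n1 := mul_nonneg c1 hΨ₀
    have n2 := mul_nonneg c2 hS₀
    linarith only [n1, n2, hε0]
  -- uniform bound at the base scales
  have hBase : ∀ s : ℝ, θ*(r₀/8) < s → s ≤ r₀/8 → Ψ s + ε₃ * S s ≤ M := by
    intro s hs1 hs2
    have hs0 : 0 < s := lt_trans (by positivity) hs1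
    have h := key (2*s) r₀ (by positivity) (by linarith only [hs2]) le_rfl
    rw [show 2*s/2 = s by ring] at h
    have ht1p : 0 < r₀/(2*s) := by positivity
    have ht1 : r₀/(2*s) < 4/θ := by
      rw [div_lt_div_iff₀ (by positivity) hθ0]
      linarith only [hs1, hθ0, hs0]
    have ht2p : 0 ≤ 2*s/r₀ := by positivity
    have ht2 : 2*s/r₀ ≤ 1/4 := by
      rw [div_le_iff₀ hr₀]; linarith only [hs2]
    have c1 : C * (ε^2*(r₀/(2*s))^3 + (2*s/r₀)^2 + ε₃*(r₀/(2*s))^2)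
        ≤ C*(ε^2*(64/θ^3) + 1 + ε₃*(16/θ^2)) :=
      mul_le_mul_of_nonneg_left
        (kkBase ε ε₃ (r₀/(2*s)) (2*s/r₀) θ hθ0 ht1p ht1 ht2p ht2 hε₃0 hε0) hC.le
    have c2 : C * (ε ^ ((1:ℝ)/3)*(2*s/r₀) ^ ((1:ℝ)/3) + ε₃*(2*s/r₀)) ≤ C*(2*ε₃) := by
      apply mul_le_mul_of_nonneg_left ?_ hC.le
      have p1 : 0 ≤ ε ^ ((1:ℝ)/3) := Real.rpow_nonneg hε0.le _
      have q1 : (2*s/r₀) ^ ((1:ℝ)/3) ≤ 1 :=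
        Real.rpow_le_one ht2p (by linarith only [ht2]) (by norm_num)
      have q1' : 0 ≤ (2*s/r₀) ^ ((1:ℝ)/3) := Real.rpow_nonneg ht2p _
      have u1 : ε ^ ((1:ℝ)/3)*(2*s/r₀) ^ ((1:ℝ)/3) ≤ ε₃ :=
        calc ε ^ ((1:ℝ)/3)*(2*s/r₀) ^ ((1:ℝ)/3) ≤ ε₃ * 1 :=
          mul_le_mul hε13 q1 q1' hε₃0.le
        _ = ε₃ := mul_one _
      have u2 : ε₃*(2*s/r₀) ≤ ε₃ := by
        calc ε₃*(2*s/r₀) ≤ ε₃*1 :=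
          mul_le_mul_of_nonneg_left (by linarith only [ht2]) hε₃0.le
        _ = ε₃ := mul_one _
      linarith only [u1, u2]
    have m1 := mul_le_mul_of_nonneg_right c1 hΨ₀
    have m2 := mul_le_mul_of_nonneg_right c2 hS₀
    rw [hMdef]
    set A1 := C * (ε^2*(r₀/(2*s))^3 + (2*s/r₀)^2 + ε₃*(r₀/(2*s))^2) with hA1def
    set A2 := C * (ε ^ ((1:ℝ)/3)*(2*s/r₀) ^ ((1:ℝ)/3) + ε₃*(2*s/r₀)) with hA2def
    linarith only [h, m1, m2]
  -- iteration
  have hiter : ∀ n : ℕ, ∀ s : ℝ, θ^(n+1)*(r₀/8) < s → s ≤ θ^n*(r₀/8) →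
      Ψ s + ε₃ * S s ≤ εstar/3 + M/4^n := by
    intro n
    induction n with
    | zero =>
      intro s h1 h2
      rw [pow_one] at h1
      rw [pow_zero, one_mul] at h2
      have hb := hBase s h1 h2
      have : M/(4:ℝ)^(0:ℕ) = M := by norm_num
      rw [this]
      linarith only [hb, hεs]
    | succ n ih =>
      intro s h1 h2
      have ht0 : 0 < s := lt_trans (by positivity) h1
      have ht0' : 0 < s/θ := div_pos ht0 hθ0
      have htθ : θ*(s/θ) = s := by field_simp
      have ht1 : θ^(n+1)*(r₀/8) < s/θ := by
        rw [lt_div_iff₀ hθ0]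
        calc θ^(n+1)*(r₀/8)*θ = θ^(n+1+1)*(r₀/8) := by ring
        _ < s := h1
      have ht2 : s/θ ≤ θ^n*(r₀/8) := by
        rw [div_le_iff₀ hθ0]
        calc s ≤ θ^(n+1)*(r₀/8) := h2
        _ = θ^n*(r₀/8)*θ := by ring
      have hpow1 : θ^n ≤ 1 := pow_le_one₀ hθ0.le hθ1.le
      have htr₀ : s/θ ≤ r₀ := by
        have h8 : (0:ℝ) ≤ r₀/8 := by positivity
        have := mul_le_mul_of_nonneg_right hpow1 h8
        linarith only [ht2, this, hr₀]
      have hc := hcontr (s/θ) ht0' htr₀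
      rw [htθ] at hc
      have hi := ih (s/θ) ht1 ht2
      have e4 : M/(4:ℝ)^(n+1) = (M/4^n)/4 := by
        rw [pow_succ]
        rw [div_div]
      rw [e4]
      linarith only [hc, hi]
  -- choose N and r₁
  obtain ⟨N, hN⟩ := pow_unbounded_of_one_lt (6*M/εstar) (by norm_num : (1:ℝ) < 4)
  have hMN : M/4^N ≤ εstar/6 := by
    rw [div_le_div_iff₀ (by positivity) (by norm_num)]
    have h6 : 6*M < 4^N * εstar := (div_lt_iff₀ hεs).mp hN
    linarith only [h6]
  refine ⟨θ^N*(r₀/8), by positivity, ?_⟩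
  intro r hr0 hrlt
  have hex : ∃ n : ℕ, θ^(n+1)*(r₀/8) < r := by
    obtain ⟨k, hk⟩ := exists_pow_lt_of_lt_one (show (0:ℝ) < r/(r₀/8) by positivity) hθ1
    refine ⟨k, ?_⟩
    have hkk : θ^(k+1) ≤ θ^k := pow_le_pow_of_le_one hθ0.le hθ1.le (Nat.le_succ k)
    have h1 := (lt_div_iff₀ (show (0:ℝ) < r₀/8 by positivity)).mp hk
    have h2 := mul_le_mul_of_nonneg_right hkk (show (0:ℝ) ≤ r₀/8 by positivity)
    linarith only [h1, h2]
  set n := Nat.find hex with hn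
  have hn1 : θ^(n+1)*(r₀/8) < r := Nat.find_spec hex
  have hn2 : r ≤ θ^n*(r₀/8) := by
    rcases Nat.eq_zero_or_pos n with h0 | hpos
    · rw [h0, pow_zero, one_mul]
      have hp : θ^N ≤ 1 := pow_le_one₀ hθ0.le hθ1.le
      have h2 := mul_le_mul_of_nonneg_right hp (show (0:ℝ) ≤ r₀/8 by positivity)
      linarith only [hrlt, h2]
    · obtain ⟨k, hk⟩ := Nat.exists_eq_succ_of_ne_zero (Nat.pos_iff_ne_zero.mp hpos)
      have hmin := Nat.find_min hex (show k < n by omega)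
      rw [hk]
      exact not_lt.mp hmin
  have hNn : N ≤ n := by
    by_contra hcon
    push_neg at hcon
    have hle : θ^N ≤ θ^(n+1) := pow_le_pow_of_le_one hθ0.le hθ1.le (by omega)
    have h2 := mul_le_mul_of_nonneg_right hle (show (0:ℝ) ≤ r₀/8 by positivity)
    linarith only [hn1, hrlt, h2]
  have hfin := hiter n r hn1 hn2
  have hmono : M/4^n ≤ M/4^N := by
    have h4 : (4:ℝ)^N ≤ 4^n := pow_le_pow_right₀ (by norm_num) hNn
    rw [div_le_div_iff₀ (by positivity) (by positivity)]
    have := mul_le_mul_of_nonneg_left h4 hM0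
    linarith only [this]
  linarith only [hfin, hmono, hMN]
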